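/- arXiv:q-alg/9703014 — 4 statements merged into one kernel-verified Lean document; each statement's English description precedes it below -/
import Mathlib

section
/- In case 1), with R defined as above (for either value of s ∈ {1,-1}; R does not depend on s) and with g = diag(t, -t⁻¹, -t⁻¹, -t) regarded as the vector (g^{ij})_{i,j=0}^{3} ∈ ℂ¹⁶, one has Rg = g, i.e. Σ_{k,l=0}^{3} R^{ij}_{kl} g^{kl} = g^{ij} for all i,j ∈ {0,1,2,3}. -/
open Matrix Complex Kronecker

noncomputable section

/-- The Pauli matrices σ₀, σ₁, σ₂, σ₃ (indices A,B ∈ {1,2} become 0,1). -/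
def pauli : Fin 4 → Matrix (Fin 2) (Fin 2) ℂ :=
  ![!![1, 0; 0, 1], !![0, 1; 1, 0], !![0, -I; I, 0], !![1, 0; 0, -1]]

/-- The matrix V, V^{AB}_i = (σ_i)_{AB}. -/
def Vmat : Matrix (Fin 2 × Fin 2) (Fin 4) ℂ :=
  Matrix.of fun p i => pauli i p.1 p.2

/-- The matrix V⁻¹, (V⁻¹)^i_{AB} = ½ (σ_i)_{BA}. -/
def Vinv : Matrix (Fin 4) (Fin 2 × Fin 2) ℂ :=
  Matrix.of fun i p => (1 / 2 : ℂ) * pauli i p.2 p.1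

/-- Identification of the ordered basis e₁⊗e₁, e₁⊗e₂, e₂⊗e₁, e₂⊗e₂ of ℂ²⊗ℂ²
with the indices 0,1,2,3. -/
def pidx (p : Fin 2 × Fin 2) : Fin 4 :=
  ⟨2 * p.1.val + p.2.val, by have := p.1.isLt; have := p.2.isLt; omega⟩

/-- Reading a 4×4 matrix as a matrix on ℂ²⊗ℂ² (w.r.t. the basis order above). -/
def toPair (Q : Matrix (Fin 4) (Fin 4) ℂ) : Matrix (Fin 2 × Fin 2) (Fin 2 × Fin 2) ℂ :=
  Matrix.of fun p p' => Q (pidx p) (pidx p')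

/-- The flip τ(u⊗v) = v⊗u on ℂ²⊗ℂ² as a 4×4 matrix. -/
def flipM : Matrix (Fin 2 × Fin 2) (Fin 2 × Fin 2) ℂ :=
  Matrix.of fun p p' => if p.1 = p'.2 ∧ p.2 = p'.1 then 1 else 0

/-- L = s q^{1/2} (1₄ + q E E'), where `Ev` is the column vector E and `Ep` the row covector E'. -/
def Lmat (s sqrtq q : ℂ) (Ev Ep : Fin 2 × Fin 2 → ℂ) :
    Matrix (Fin 2 × Fin 2) (Fin 2 × Fin 2) ℂ :=
  Matrix.of fun p p' => s * sqrtq * ((if p = p' then 1 else 0) + q * Ev p * Ep p')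

/-- 1₂⊗Y⊗1₂, acting on the middle two tensor factors of ℂ²⊗ℂ²⊗ℂ²⊗ℂ². -/
def midX (Y : Matrix (Fin 2 × Fin 2) (Fin 2 × Fin 2) ℂ) :
    Matrix ((Fin 2 × Fin 2) × (Fin 2 × Fin 2)) ((Fin 2 × Fin 2) × (Fin 2 × Fin 2)) ℂ :=
  Matrix.of fun p p' =>
    (if p.1.1 = p'.1.1 then 1 else 0) * Y (p.1.2, p.2.1) (p'.1.2, p'.2.1) *
      (if p.2.2 = p'.2.2 then 1 else 0)

/-- R = (V⁻¹⊗V⁻¹)(1₂⊗X⊗1₂)(L⊗L̃)(1₂⊗X⁻¹⊗1₂)(V⊗V), with L̃ = q τ L τ. -/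
def Rmat (s sqrtq q : ℂ) (Ev Ep : Fin 2 × Fin 2 → ℂ)
    (X : Matrix (Fin 2 × Fin 2) (Fin 2 × Fin 2) ℂ) :
    Matrix (Fin 4 × Fin 4) (Fin 4 × Fin 4) ℂ :=
  (Vinv ⊗ₖ Vinv) * midX X *
    (Lmat s sqrtq q Ev Ep ⊗ₖ (q • (flipM * Lmat s sqrtq q Ev Ep * flipM))) *
    midX X⁻¹ * (Vmat ⊗ₖ Vmat)

/-!
Pulled back through `V ⊗ V` and `1 ⊗ X ⊗ 1`, the metric `g` becomes the pure tensor `2 E ⊗ E`.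
Since `E' E = -2`, `E` is an eigenvector of `L` with eigenvalue `-s`, and since `τ E = -E` it is
one of `L̃ = τ L τ` with the same eigenvalue; so `L ⊗ L̃` fixes `E ⊗ E` because `s² = 1`, and
conjugating back gives `R g = g`.
-/

theorem Matrix.kronecker_mulVec_tmul {m n m' n' : Type*} [Fintype n] [Fintype n'] {α : Type*}
    [CommSemiring α] (A : Matrix m n α) (B : Matrix m' n' α) (u : n → α) (v : n' → α) :
    (A ⊗ₖ B) *ᵥ (fun p => u p.1 * v p.2) = fun p => (A *ᵥ u) p.1 * (B *ᵥ v) p.2 := by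
  ext ⟨i, j⟩
  simp only [mulVec, dotProduct, kroneckerMap_apply, Fintype.sum_prod_type, Finset.sum_mul_sum]
  exact Finset.sum_congr rfl fun _ _ => Finset.sum_congr rfl fun _ _ => by ring

theorem Vinv_mul_Vmat : Vinv * Vmat = 1 := by
  ext i j
  fin_cases i <;> fin_cases j <;>
    norm_num [Vinv, Vmat, mul_apply, Fintype.sum_prod_type, pauli, one_apply, mul_assoc]

theorem pidx_bijective : Function.Bijective pidx := by decide

theorem toPair_eq_submatrix (Q : Matrix (Fin 4) (Fin 4) ℂ) : toPair Q = Q.submatrix pidx pidx :=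
  rfl

theorem toPair_mul (P Q : Matrix (Fin 4) (Fin 4) ℂ) : toPair (P * Q) = toPair P * toPair Q := by
  simp only [toPair_eq_submatrix, submatrix_mul _ _ _ _ _ pidx_bijective]

theorem toPair_one : toPair 1 = 1 := by
  rw [toPair_eq_submatrix, submatrix_one _ pidx_bijective.injective]

theorem flipM_mulVec (v : Fin 2 × Fin 2 → ℂ) : flipM *ᵥ v = fun p => v p.swap := by
  ext ⟨a, b⟩
  simp [flipM, mulVec, dotProduct, Fintype.sum_prod_type, ite_and]

theorem flipM_mul_flipM : flipM * flipM = 1 := by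
  ext ⟨a, b⟩ ⟨c, d⟩
  simp [flipM, mul_apply, Fintype.sum_prod_type, one_apply, ite_and]

theorem midX_mul (A B : Matrix (Fin 2 × Fin 2) (Fin 2 × Fin 2) ℂ) :
    midX A * midX B = midX (A * B) := by
  ext ⟨⟨a, b⟩, ⟨c, d⟩⟩ ⟨⟨a', b'⟩, ⟨c', d'⟩⟩
  fin_cases a <;> fin_cases a' <;> fin_cases d <;> fin_cases d' <;>
    simp [midX, mul_apply, Fintype.sum_prod_type]

theorem midX_one : midX 1 = 1 := by
  ext ⟨⟨a, b⟩, ⟨c, d⟩⟩ ⟨⟨a', b'⟩, ⟨c', d'⟩⟩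
  simp only [midX, one_apply, of_apply, Prod.mk.injEq]
  by_cases a = a' <;> by_cases b = b' <;> by_cases c = c' <;> by_cases d = d' <;> simp [*]

theorem Lmat_eq_smul (s sqrtq q : ℂ) (Ev Ep : Fin 2 × Fin 2 → ℂ) :
    Lmat s sqrtq q Ev Ep = (s * sqrtq) • (1 + q • vecMulVec Ev Ep) := by
  ext p p'
  simp [Lmat, one_apply, vecMulVec_apply, mul_assoc]

theorem Lmat_mulVec_self (s sqrtq q : ℂ) (Ev Ep : Fin 2 × Fin 2 → ℂ) :
    Lmat s sqrtq q Ev Ep *ᵥ Ev = (s * sqrtq * (1 + q * (Ep ⬝ᵥ Ev))) • Ev := by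
  rw [Lmat_eq_smul, smul_mulVec, add_mulVec, one_mulVec, smul_mulVec, vecMulVec_mulVec,
    op_smul_eq_smul, smul_smul]
  module

theorem Rmat_mulVec_eq_self {s sqrtq q : ℂ} {Ev Ep : Fin 2 × Fin 2 → ℂ}
    {X : Matrix (Fin 2 × Fin 2) (Fin 2 × Fin 2) ℂ} (hX : IsUnit X.det)
    {g : Fin 4 × Fin 4 → ℂ} {w : (Fin 2 × Fin 2) × (Fin 2 × Fin 2) → ℂ}
    (hw : midX X *ᵥ w = (Vmat ⊗ₖ Vmat) *ᵥ g)
    (hfix : (Lmat s sqrtq q Ev Ep ⊗ₖ (q • (flipM * Lmat s sqrtq q Ev Ep * flipM))) *ᵥ w = w) :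
    Rmat s sqrtq q Ev Ep X *ᵥ g = g := by
  have hw_inv : midX X⁻¹ *ᵥ ((Vmat ⊗ₖ Vmat) *ᵥ g) = w := by
    rw [← hw, mulVec_mulVec, midX_mul, nonsing_inv_mul _ hX, midX_one, one_mulVec]
  simp only [Rmat, ← mulVec_mulVec]
  rw [hw_inv, hfix, hw, mulVec_mulVec, ← mul_kronecker_mul, Vinv_mul_Vmat, one_kronecker_one,
    one_mulVec]

namespace Case1

def E : Fin 2 × Fin 2 → ℂ := fun p => !![0, 1; -1, 0] p.1 p.2

def E' : Fin 2 × Fin 2 → ℂ := fun p => !![0, -1; 1, 0] p.1 p.2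

def X (t : ℂ) : Matrix (Fin 2 × Fin 2) (Fin 2 × Fin 2) ℂ :=
  flipM * toPair (diagonal ![t⁻¹, t, t, t⁻¹])

def metric (t : ℂ) : Fin 4 × Fin 4 → ℂ := fun p => diagonal ![t, -t⁻¹, -t⁻¹, -t] p.1 p.2

theorem E'_dotProduct_E : E' ⬝ᵥ E = -2 := by
  norm_num [E, E', dotProduct, Fintype.sum_prod_type]

theorem flipM_mulVec_E : flipM *ᵥ E = -E := by
  ext ⟨a, b⟩
  fin_cases a <;> fin_cases b <;> simp [flipM_mulVec, E]

theorem Lmat_mulVec_E (s : ℂ) : Lmat s 1 1 E E' *ᵥ E = -s • E := by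
  rw [Lmat_mulVec_self, E'_dotProduct_E]
  norm_num

theorem flipM_Lmat_flipM_mulVec_E (s : ℂ) :
    ((1 : ℂ) • (flipM * Lmat s 1 1 E E' * flipM)) *ᵥ E = -s • E := by
  simp only [one_smul, ← mulVec_mulVec, flipM_mulVec_E, mulVec_neg, Lmat_mulVec_E, mulVec_smul,
    smul_neg, neg_neg]

theorem kronecker_mulVec_E_tmul_E {s : ℂ} (hs : s * s = 1) :
    (Lmat s 1 1 E E' ⊗ₖ ((1 : ℂ) • (flipM * Lmat s 1 1 E E' * flipM))) *ᵥ
      (fun p => E p.1 * E p.2) = fun p => E p.1 * E p.2 := by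
  rw [kronecker_mulVec_tmul, Lmat_mulVec_E, flipM_Lmat_flipM_mulVec_E]
  ext p
  simp only [Pi.smul_apply, smul_eq_mul]
  linear_combination (E p.1 * E p.2) * hs

theorem isUnit_det_X {t : ℂ} (ht : t ≠ 0) : IsUnit (X t).det := by
  have hdiag : diagonal ![t⁻¹, t, t, t⁻¹] * diagonal ![t, t⁻¹, t⁻¹, t] = 1 := by
    rw [diagonal_mul_diagonal, ← diagonal_one]
    congr 1
    ext i
    fin_cases i <;> simp [ht]
  refine isUnit_det_of_right_inverse (B := toPair (diagonal ![t, t⁻¹, t⁻¹, t]) * flipM) ?_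
  rw [X, mul_assoc, ← mul_assoc (toPair _), ← toPair_mul, hdiag, toPair_one, one_mul,
    flipM_mul_flipM]

theorem midX_X_mulVec (t : ℂ) :
    midX (X t) *ᵥ (2 • fun p => E p.1 * E p.2) = (Vmat ⊗ₖ Vmat) *ᵥ metric t := by
  ext ⟨⟨a, b⟩, ⟨c, d⟩⟩
  fin_cases a <;> fin_cases b <;> fin_cases c <;> fin_cases d <;>
    simp [mulVec, dotProduct, Fintype.sum_prod_type, Fin.sum_univ_four, midX, X, E, metric,
      flipM, toPair, pidx, Vmat, pauli, mul_apply, kroneckerMap_apply] <;> ring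

theorem Rmat_mulVec_metric {t : ℂ} (ht : t ≠ 0) {s : ℂ} (hs : s * s = 1) :
    Rmat s 1 1 E E' (X t) *ᵥ metric t = metric t :=
  Rmat_mulVec_eq_self (isUnit_det_X ht) (midX_X_mulVec t)
    (by rw [mulVec_smul, kronecker_mulVec_E_tmul_E hs])

end Case1

theorem R_fixes_metric_case1_general (t : ℝ) (ht0 : 0 < t)
    (s : ℂ) (hs : s = 1 ∨ s = -1) :
    ∀ i j : Fin 4, ∑ k : Fin 4, ∑ l : Fin 4,
        Rmat s 1 1 (fun p => !![0, 1; -1, 0] p.1 p.2) (fun p => !![0, -1; 1, 0] p.1 p.2)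
            (flipM * toPair (Matrix.diagonal ![(t : ℂ)⁻¹, (t : ℂ), (t : ℂ), (t : ℂ)⁻¹]))
            (i, j) (k, l) *
          Matrix.diagonal ![(t : ℂ), -(t : ℂ)⁻¹, -(t : ℂ)⁻¹, -(t : ℂ)] k l
      = Matrix.diagonal ![(t : ℂ), -(t : ℂ)⁻¹, -(t : ℂ)⁻¹, -(t : ℂ)] i j := by
  have ht : (t : ℂ) ≠ 0 := ofReal_ne_zero.2 ht0.ne'
  have hs2 : s * s = 1 := by rcases hs with rfl | rfl <;> norm_num
  intro i j
  have h := congrFun (Case1.Rmat_mulVec_metric ht hs2) (i, j)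
  simp only [mulVec, dotProduct, Fintype.sum_prod_type] at h
  exact h

/-- in case 1), for either s ∈ {1,-1}, Rg = g with
g = diag(t,-t⁻¹,-t⁻¹,-t) read as the vector (g^{ij}) ∈ ℂ¹⁶. -/
theorem R_fixes_metric_case1 (t : ℝ) (ht0 : 0 < t) (ht1 : t ≤ 1)
    (s : ℂ) (hs : s = 1 ∨ s = -1) :
    ∀ i j : Fin 4, ∑ k : Fin 4, ∑ l : Fin 4,
        Rmat s 1 1 (fun p => !![0, 1; -1, 0] p.1 p.2) (fun p => !![0, -1; 1, 0] p.1 p.2)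
            (flipM * toPair (Matrix.diagonal ![(t : ℂ)⁻¹, (t : ℂ), (t : ℂ), (t : ℂ)⁻¹]))
            (i, j) (k, l) *
          Matrix.diagonal ![(t : ℂ), -(t : ℂ)⁻¹, -(t : ℂ)⁻¹, -(t : ℂ)] k l
      = Matrix.diagonal ![(t : ℂ), -(t : ℂ)⁻¹, -(t : ℂ)⁻¹, -(t : ℂ)] i j :=
  R_fixes_metric_case1_general t ht0 s hs
end
end

section
/- In case 1), let g = diag(t, -t⁻¹, -t⁻¹, -t) and let R be defined as above (for either value of s ∈ {1,-1}; R does not depend on s). For a,b ∈ ℂ, the deformed Clifford relations γ^i γ^j + Σ_{k,l=0}^{3} R^{ji}_{lk} γ^k γ^l = 2 g^{ji}·1₄ hold for all i,j ∈ {0,1,2,3} if and only if ab = 1. -/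
open Matrix Complex Kronecker

noncomputable section

/-- A_i = q^{-1/2} Eᵀ (σ_i∘D) E, where D = τX⁻¹τ, (σ_i∘D)_{KL} = Σ_{A,B}(σ_i)_{AB} D^{AB}_{KL},
and `invsqrtq` denotes q^{-1/2}. -/
def Amat (invsqrtq : ℂ) (E : Matrix (Fin 2) (Fin 2) ℂ)
    (X : Matrix (Fin 2 × Fin 2) (Fin 2 × Fin 2) ℂ) (i : Fin 4) : Matrix (Fin 2) (Fin 2) ℂ :=
  invsqrtq • (E.transpose *
    (Matrix.of fun K L => ∑ A : Fin 2, ∑ B : Fin 2,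
      pauli i A B * (flipM * X⁻¹ * flipM) (A, B) (K, L)) * E)

/-- The gamma matrices γ^i = [[0, b A_i],[a σ_i, 0]] as block matrices on ℂ² ⊕ ℂ². -/
def gam (a b invsqrtq : ℂ) (E : Matrix (Fin 2) (Fin 2) ℂ)
    (X : Matrix (Fin 2 × Fin 2) (Fin 2 × Fin 2) ℂ) (i : Fin 4) :
    Matrix (Fin 2 ⊕ Fin 2) (Fin 2 ⊕ Fin 2) ℂ :=
  Matrix.fromBlocks 0 (b • Amat invsqrtq E X i) (a • pauli i) 0


namespace CliffordAux

/-- generalized permutation matrix: row `p` has entry `c p` in column `f p`. -/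
def rf {α β : Type*} [DecidableEq β] (f : α → β) (c : α → ℂ) : Matrix α β ℂ :=
  Matrix.of fun p q => if q = f p then c p else 0

section Generic

variable {α β γ : Type*} [Fintype α] [Fintype β] [Fintype γ]
  [DecidableEq α] [DecidableEq β] [DecidableEq γ]

lemma rf_mul_rf (f : α → β) (c : α → ℂ) (g : β → γ) (d : β → ℂ) :
    rf f c * rf g d = rf (fun p => g (f p)) (fun p => c p * d (f p)) := by
  ext p q
  rw [Matrix.mul_apply, Finset.sum_eq_single (f p)
    (fun m _ hm => by simp [rf, hm]) (by simp)]
  simp [rf, mul_ite, mul_zero]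

lemma rf_mul (f : α → β) (c : α → ℂ) (B : Matrix β γ ℂ) :
    rf f c * B = Matrix.of fun p j => c p * B (f p) j := by
  ext p j
  rw [Matrix.mul_apply, Finset.sum_eq_single (f p)
    (fun m _ hm => by simp [rf, hm]) (by simp)]
  simp [rf]

lemma rf_kron (f : α → β) (c : α → ℂ) (g : α → β) (d : α → ℂ) :
    (Matrix.kroneckerMap (· * ·) (rf f c) (rf g d)) =
      rf (fun p : α × α => (f p.1, g p.2)) (fun p => c p.1 * d p.2) := by
  ext p q
  simp only [rf, Matrix.kroneckerMap_apply, Matrix.of_apply, Prod.ext_iff]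
  split_ifs <;> simp_all <;> tauto

end Generic

lemma rf_congr {α β : Type*} [DecidableEq β] {f g : α → β} {c d : α → ℂ}
    (hf : ∀ p, f p = g p) (hc : ∀ p, c p = d p) : rf f c = rf g d := by
  ext p q
  simp only [rf, Matrix.of_apply, hf p, hc p]

lemma flip_rf : flipM = rf (fun p : Fin 2 × Fin 2 => (p.2, p.1)) (fun _ => 1) := by
  ext p q
  simp only [flipM, rf, Matrix.of_apply, Prod.ext_iff]
  split_ifs <;> simp_all <;> tauto

lemma flip_mul_flip : flipM * flipM = (1 : Matrix (Fin 2 × Fin 2) (Fin 2 × Fin 2) ℂ) := by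
  rw [flip_rf, rf_mul_rf]
  ext p q
  simp [rf, Matrix.one_apply, eq_comm]

lemma pidx_inj : ∀ p q : Fin 2 × Fin 2, pidx p = pidx q ↔ p = q := by decide

lemma toPair_diag (v : Fin 4 → ℂ) :
    toPair (Matrix.diagonal v) = rf id (fun p => v (pidx p)) := by
  ext p q
  simp only [toPair, rf, Matrix.of_apply, Matrix.diagonal_apply, id]
  exact if_congr ⟨fun h => ((pidx_inj p q).1 h).symm, fun h => by rw [h]⟩ rfl rfl

lemma midX_rf (f : Fin 2 × Fin 2 → Fin 2 × Fin 2) (c : Fin 2 × Fin 2 → ℂ) :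
    midX (rf f c) =
      rf (fun p => ((p.1.1, (f (p.1.2, p.2.1)).1), ((f (p.1.2, p.2.1)).2, p.2.2)))
        (fun p => c (p.1.2, p.2.1)) := by
  ext p q
  simp only [midX, rf, Matrix.of_apply, Prod.ext_iff]
  split_ifs <;> simp_all <;> tauto

/-- The matrix X of case 1). -/
def Xex (u : ℂ) : Matrix (Fin 2 × Fin 2) (Fin 2 × Fin 2) ℂ :=
  flipM * toPair (Matrix.diagonal ![u⁻¹, u, u, u⁻¹])

lemma Xex_rf (u : ℂ) :
    Xex u = rf (fun p : Fin 2 × Fin 2 => (p.2, p.1))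
      (fun p => ![u⁻¹, u, u, u⁻¹] (pidx (p.2, p.1))) := by
  rw [Xex, flip_rf, toPair_diag, rf_mul_rf]
  exact rf_congr (fun p => rfl) (fun p => one_mul _)

/-- Explicit inverse of X. -/
def Xiex (u : ℂ) : Matrix (Fin 2 × Fin 2) (Fin 2 × Fin 2) ℂ :=
  rf (fun p : Fin 2 × Fin 2 => (p.2, p.1)) (fun p => ![u, u⁻¹, u⁻¹, u] (pidx p))

lemma Xmul (u : ℂ) (hu : u ≠ 0) : Xex u * Xiex u = 1 := by
  rw [Xex_rf, Xiex, rf_mul_rf]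
  ext p q
  fin_cases p <;> fin_cases q <;>
    simp [rf, pidx, Matrix.one_apply, Prod.ext_iff, hu]

lemma Xinv_eq (u : ℂ) (hu : u ≠ 0) : (Xex u)⁻¹ = Xiex u :=
  Matrix.inv_eq_right_inv (Xmul u hu)

/-- index permutation of the Ẑ matrix. -/
def Fzf (p : (Fin 2 × Fin 2) × (Fin 2 × Fin 2)) : (Fin 2 × Fin 2) × (Fin 2 × Fin 2) :=
  (p.2, p.1)

/-- coefficients of the Ẑ matrix. -/
def Czf (u : ℂ) (p : (Fin 2 × Fin 2) × (Fin 2 × Fin 2)) : ℂ :=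
  if p.1.2 = p.2.1 then (if p.1.1 = p.2.2 then 1 else u⁻¹ ^ 2)
  else (if p.1.1 = p.2.2 then u ^ 2 else 1)

lemma Z_eq (u : ℂ) (hu : u ≠ 0) :
    midX (Xex u) * (flipM ⊗ₖ flipM) * midX ((Xex u)⁻¹) = rf Fzf (Czf u) := by
  rw [Xinv_eq u hu, Xiex, Xex_rf, flip_rf, rf_kron, midX_rf, midX_rf, rf_mul_rf, rf_mul_rf]
  refine rf_congr (fun p => ?_) (fun p => ?_)
  · fin_cases p <;> rfl
  · fin_cases p <;> (simp only [Czf, pidx]; norm_num) <;> (try field_simp) <;> (try ring)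

end CliffordAux

namespace CliffordAux

lemma lmat_flip (s : ℂ) :
    Lmat s 1 1 (fun p => !![0, 1; -1, 0] p.1 p.2) (fun p => !![0, -1; 1, 0] p.1 p.2)
      = s • flipM := by
  ext p q
  fin_cases p <;> fin_cases q <;>
    simp [Lmat, flipM, Prod.ext_iff] <;> ring

lemma five_assoc {M : Type*} [Monoid M] (A B C D E : M) :
    A * B * C * D * E = A * (B * C * D) * E := by
  rw [mul_assoc A B C, mul_assoc A (B * C) D]

lemma Rmat_eq (s u : ℂ) (hss : s * s = 1) (hu : u ≠ 0) :
    Rmat s 1 1 (fun p => !![0, 1; -1, 0] p.1 p.2) (fun p => !![0, -1; 1, 0] p.1 p.2) (Xex u)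
      = (Vinv ⊗ₖ Vinv) * (rf Fzf (Czf u) * (Vmat ⊗ₖ Vmat)) := by
  have h1 : (1 : ℂ) • (flipM * (s • flipM) * flipM) = s • flipM := by
    rw [one_smul, Matrix.mul_smul, Matrix.smul_mul, flip_mul_flip, one_mul]
  simp only [Rmat, lmat_flip, h1]
  rw [Matrix.smul_kronecker, Matrix.kronecker_smul, smul_smul, hss, one_smul]
  rw [Matrix.mul_assoc (Vinv ⊗ₖ Vinv), Matrix.mul_assoc (Vinv ⊗ₖ Vinv), Z_eq u hu,
    Matrix.mul_assoc]

lemma Rmat_apply (s u : ℂ) (hss : s * s = 1) (hu : u ≠ 0) (jq iq lq kq : Fin 4) :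
    Rmat s 1 1 (fun p => !![0, 1; -1, 0] p.1 p.2) (fun p => !![0, -1; 1, 0] p.1 p.2) (Xex u)
        (jq, iq) (lq, kq)
      = ∑ m : (Fin 2 × Fin 2) × (Fin 2 × Fin 2),
          (Vinv jq m.1 * Vinv iq m.2 * Czf u m) * Vmat (Fzf m).1 lq * Vmat (Fzf m).2 kq := by
  rw [Rmat_eq s u hss hu, rf_mul, Matrix.mul_apply]
  refine Finset.sum_congr rfl fun m _ => ?_
  simp only [Matrix.kroneckerMap_apply, Matrix.of_apply]
  ring

lemma sum_exchange {n ι κ : Type*} [Fintype n] [DecidableEq n] [Fintype ι] [Fintype κ]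
    (w : κ → ℂ) (v1 v2 : κ → ι → ℂ) (G : ι → Matrix n n ℂ) :
    ∑ k : ι, ∑ l : ι, (∑ m : κ, w m * v1 m l * v2 m k) • (G k * G l)
      = ∑ m : κ, w m • ((∑ k, v2 m k • G k) * (∑ l, v1 m l • G l)) := by
  calc ∑ k : ι, ∑ l : ι, (∑ m : κ, w m * v1 m l * v2 m k) • (G k * G l)
      = ∑ k : ι, ∑ l : ι, ∑ m : κ, (w m * v1 m l * v2 m k) • (G k * G l) := by
        simp only [Finset.sum_smul]
    _ = ∑ k : ι, ∑ m : κ, ∑ l : ι, (w m * v1 m l * v2 m k) • (G k * G l) :=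
        Finset.sum_congr rfl fun k _ => Finset.sum_comm
    _ = ∑ m : κ, ∑ k : ι, ∑ l : ι, (w m * v1 m l * v2 m k) • (G k * G l) :=
        Finset.sum_comm
    _ = ∑ m : κ, w m • ((∑ k, v2 m k • G k) * (∑ l, v1 m l • G l)) := by
        refine Finset.sum_congr rfl fun m _ => ?_
        rw [Matrix.sum_mul, Finset.smul_sum]
        refine Finset.sum_congr rfl fun k _ => ?_
        rw [Matrix.mul_sum, Finset.smul_sum]
        refine Finset.sum_congr rfl fun l _ => ?_
        rw [smul_mul_assoc, mul_smul_comm, smul_smul, smul_smul]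
        congr 1
        ring

/-- The explicit matrices A_i of case 1). -/
def Aex (u : ℂ) : Fin 4 → Matrix (Fin 2) (Fin 2) ℂ :=
  ![!![u, 0; 0, u], !![0, -u⁻¹; -u⁻¹, 0],
    !![0, Complex.I * u⁻¹; -Complex.I * u⁻¹, 0], !![-u, 0; 0, u]]

lemma Amat_eq (u : ℂ) (hu : u ≠ 0) (i : Fin 4) :
    Amat 1 !![0, 1; -1, 0] (Xex u) i = Aex u i := by
  simp only [Amat, Xinv_eq u hu, Xiex, flip_rf, rf_mul_rf, one_smul]
  fin_cases i <;> (ext x y; fin_cases x <;> fin_cases y) <;>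
    (simp [rf, pauli, Aex, pidx, Matrix.mul_apply, Fin.sum_univ_two, Matrix.transpose,
      Prod.ext_iff]; try ring_nf; try simp [Complex.I_sq]; try ring)

/-- the explicit gamma matrices. -/
def Gx (a b u : ℂ) (k : Fin 4) : Matrix (Fin 2 ⊕ Fin 2) (Fin 2 ⊕ Fin 2) ℂ :=
  Matrix.fromBlocks 0 (b • Aex u k) (a • pauli k) 0

lemma gam_eq (a b u : ℂ) (hu : u ≠ 0) (i : Fin 4) :
    gam a b 1 !![0, 1; -1, 0] (Xex u) i = Gx a b u i := by
  simp only [gam, Gx, Amat_eq u hu]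

def PAex (u : ℂ) (r : Fin 2 × Fin 2) : Matrix (Fin 2) (Fin 2) ℂ :=
  ![![!![0, 0; 0, 2 * u], !![0, 0; -2 * u⁻¹, 0]],
    ![!![0, -2 * u⁻¹; 0, 0], !![2 * u, 0; 0, 0]]] r.1 r.2

def Qsex (r : Fin 2 × Fin 2) : Matrix (Fin 2) (Fin 2) ℂ :=
  ![![!![2, 0; 0, 0], !![0, 0; 2, 0]],
    ![!![0, 2; 0, 0], !![0, 0; 0, 2]]] r.1 r.2

lemma hPA (u : ℂ) (r : Fin 2 × Fin 2) : (∑ k, Vmat r k • Aex u k) = PAex u r := by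
  fin_cases r <;> (ext x y; fin_cases x <;> fin_cases y) <;>
    (simp [Vmat, pauli, Aex, PAex, Fin.sum_univ_four]; try ring_nf; try simp [Complex.I_sq]; try ring)

lemma hQs (r : Fin 2 × Fin 2) : (∑ k, Vmat r k • pauli k) = Qsex r := by
  fin_cases r <;> (ext x y; fin_cases x <;> fin_cases y) <;>
    (simp [Vmat, pauli, Qsex, Fin.sum_univ_four]; try ring_nf; try simp [Complex.I_sq]; try ring)

lemma sum_fromBlocks {ι : Type*} (s : Finset ι)
    (A : ι → Matrix (Fin 2) (Fin 2) ℂ) (B : ι → Matrix (Fin 2) (Fin 2) ℂ)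
    (C : ι → Matrix (Fin 2) (Fin 2) ℂ) (D : ι → Matrix (Fin 2) (Fin 2) ℂ) :
    (∑ i ∈ s, Matrix.fromBlocks (A i) (B i) (C i) (D i)) =
      Matrix.fromBlocks (∑ i ∈ s, A i) (∑ i ∈ s, B i) (∑ i ∈ s, C i) (∑ i ∈ s, D i) := by
  ext (x | x) (y | y) <;> simp [Matrix.sum_apply, Matrix.fromBlocks]

lemma hGamV (a b u : ℂ) (r : Fin 2 × Fin 2) :
    (∑ k, Vmat r k • Gx a b u k)
      = Matrix.fromBlocks 0 (b • PAex u r) (a • Qsex r) 0 := by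
  simp only [Gx, Matrix.fromBlocks_smul, smul_zero]
  rw [sum_fromBlocks]
  rw [Finset.sum_const_zero]
  have hB : (∑ k, Vmat r k • (b • Aex u k)) = b • ∑ k, Vmat r k • Aex u k := by
    rw [Finset.smul_sum]
    exact Finset.sum_congr rfl fun k _ => (smul_comm _ _ _).symm
  have hC : (∑ k, Vmat r k • (a • pauli k)) = a • ∑ k, Vmat r k • pauli k := by
    rw [Finset.smul_sum]
    exact Finset.sum_congr rfl fun k _ => (smul_comm _ _ _).symm
  rw [hB, hC, hPA, hQs]

end CliffordAux

namespace CliffordAux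

set_option maxHeartbeats 6400000 in
lemma crunchU (u : ℂ) (hu : u ≠ 0) (i j : Fin 4) :
    Aex u i * pauli j +
      ∑ m : (Fin 2 × Fin 2) × (Fin 2 × Fin 2),
        (Vinv j m.1 * Vinv i m.2 * Czf u m) • (PAex u (Fzf m).2 * Qsex (Fzf m).1)
      = (2 * Matrix.diagonal ![u, -u⁻¹, -u⁻¹, -u] j i) • 1 := by
  fin_cases i <;> fin_cases j <;>
    (simp only [Fintype.sum_prod_type, Fin.sum_univ_two];
     norm_num [Vinv, pauli, Czf, Fzf, Matrix.diagonal];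
     ext x y;
     fin_cases x <;> fin_cases y <;>
       (simp [Matrix.mul_apply, Fin.sum_univ_two, PAex, Qsex, Aex, pauli, Matrix.one_apply];
        try field_simp; try ring_nf; try simp [Complex.I_sq]; try ring))

set_option maxHeartbeats 6400000 in
lemma crunchL (u : ℂ) (hu : u ≠ 0) (i j : Fin 4) :
    pauli i * Aex u j +
      ∑ m : (Fin 2 × Fin 2) × (Fin 2 × Fin 2),
        (Vinv j m.1 * Vinv i m.2 * Czf u m) • (Qsex (Fzf m).2 * PAex u (Fzf m).1)
      = (2 * Matrix.diagonal ![u, -u⁻¹, -u⁻¹, -u] j i) • 1 := by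
  fin_cases i <;> fin_cases j <;>
    (simp only [Fintype.sum_prod_type, Fin.sum_univ_two];
     norm_num [Vinv, pauli, Czf, Fzf, Matrix.diagonal];
     ext x y;
     fin_cases x <;> fin_cases y <;>
       (simp [Matrix.mul_apply, Fin.sum_univ_two, PAex, Qsex, Aex, pauli, Matrix.one_apply];
        try field_simp; try ring_nf; try simp [Complex.I_sq]; try ring))

lemma master (s u a b : ℂ) (hss : s * s = 1) (hu : u ≠ 0) (i j : Fin 4) :
    Gx a b u i * Gx a b u j +
      ∑ k : Fin 4, ∑ l : Fin 4,
        Rmat s 1 1 (fun p => !![0, 1; -1, 0] p.1 p.2) (fun p => !![0, -1; 1, 0] p.1 p.2) (Xex u)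
          (j, i) (l, k) • (Gx a b u k * Gx a b u l)
      = ((a * b) * (2 * Matrix.diagonal ![u, -u⁻¹, -u⁻¹, -u] j i)) • 1 := by
  have hsum : (∑ k : Fin 4, ∑ l : Fin 4,
        Rmat s 1 1 (fun p => !![0, 1; -1, 0] p.1 p.2) (fun p => !![0, -1; 1, 0] p.1 p.2) (Xex u)
          (j, i) (l, k) • (Gx a b u k * Gx a b u l))
      = ∑ m : (Fin 2 × Fin 2) × (Fin 2 × Fin 2),
          (Vinv j m.1 * Vinv i m.2 * Czf u m) •
            ((∑ k, Vmat (Fzf m).2 k • Gx a b u k) * (∑ l, Vmat (Fzf m).1 l • Gx a b u l)) := by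
    simp_rw [Rmat_apply s u hss hu]
    exact sum_exchange (fun m => Vinv j m.1 * Vinv i m.2 * Czf u m)
      (fun m l => Vmat (Fzf m).1 l) (fun m k => Vmat (Fzf m).2 k) (Gx a b u)
  rw [hsum]
  simp only [hGamV a b u]
  have hProd : ∀ r2 r1 : Fin 2 × Fin 2,
      Matrix.fromBlocks 0 (b • PAex u r2) (a • Qsex r2) 0 *
        Matrix.fromBlocks 0 (b • PAex u r1) (a • Qsex r1) 0
      = (a * b) • Matrix.fromBlocks (PAex u r2 * Qsex r1) 0 0 (Qsex r2 * PAex u r1) := by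
    intro r2 r1
    simp [Matrix.fromBlocks_multiply, Matrix.fromBlocks_smul, Matrix.smul_mul, Matrix.mul_smul,
      smul_smul, mul_comm]
  simp only [hProd]
  have hGij : Gx a b u i * Gx a b u j
      = (a * b) • Matrix.fromBlocks (Aex u i * pauli j) 0 0 (pauli i * Aex u j) := by
    simp [Gx, Matrix.fromBlocks_multiply, Matrix.fromBlocks_smul, Matrix.smul_mul,
      Matrix.mul_smul, smul_smul, mul_comm]
  rw [hGij]
  have hcomm : ∀ (m : (Fin 2 × Fin 2) × (Fin 2 × Fin 2))
      (M : Matrix (Fin 2 ⊕ Fin 2) (Fin 2 ⊕ Fin 2) ℂ),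
      (Vinv j m.1 * Vinv i m.2 * Czf u m) • ((a * b) • M)
        = (a * b) • ((Vinv j m.1 * Vinv i m.2 * Czf u m) • M) := fun m M => smul_comm _ _ _
  simp only [hcomm]
  rw [← Finset.smul_sum, ← smul_add]
  have hsplit : (Matrix.fromBlocks (Aex u i * pauli j) 0 0 (pauli i * Aex u j) +
      ∑ m : (Fin 2 × Fin 2) × (Fin 2 × Fin 2),
        (Vinv j m.1 * Vinv i m.2 * Czf u m) •
          Matrix.fromBlocks (PAex u (Fzf m).2 * Qsex (Fzf m).1) 0 0
            (Qsex (Fzf m).2 * PAex u (Fzf m).1))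
      = (2 * Matrix.diagonal ![u, -u⁻¹, -u⁻¹, -u] j i) • 1 := by
    have hfb : ∀ m : (Fin 2 × Fin 2) × (Fin 2 × Fin 2),
        (Vinv j m.1 * Vinv i m.2 * Czf u m) •
          Matrix.fromBlocks (PAex u (Fzf m).2 * Qsex (Fzf m).1) 0 0
            (Qsex (Fzf m).2 * PAex u (Fzf m).1)
        = Matrix.fromBlocks
            ((Vinv j m.1 * Vinv i m.2 * Czf u m) • (PAex u (Fzf m).2 * Qsex (Fzf m).1)) 0 0
            ((Vinv j m.1 * Vinv i m.2 * Czf u m) • (Qsex (Fzf m).2 * PAex u (Fzf m).1)) := by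
      intro m
      rw [Matrix.fromBlocks_smul, smul_zero]
    simp only [hfb]
    rw [sum_fromBlocks, Finset.sum_const_zero, Matrix.fromBlocks_add]
    try simp only [add_zero, zero_add]
    rw [crunchU u hu i j, crunchL u hu i j]
    rw [← Matrix.fromBlocks_one (l := Fin 2) (m := Fin 2), Matrix.fromBlocks_smul, smul_zero]
  rw [hsplit, smul_smul]

end CliffordAux

open CliffordAux in
/-- in case 1), for either s ∈ {1,-1}, the deformed Clifford relations
γ^i γ^j + Σ_{k,l} R^{ji}_{lk} γ^k γ^l = 2 g^{ji} 1₄ hold for all i,j iff ab = 1. -/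
theorem clifford_case1 (t : ℝ) (ht0 : 0 < t) (ht1 : t ≤ 1)
    (s : ℂ) (hs : s = 1 ∨ s = -1) (a b : ℂ) :
    (∀ i j : Fin 4,
        gam a b 1 !![0, 1; -1, 0]
            (flipM * toPair (Matrix.diagonal ![(t : ℂ)⁻¹, (t : ℂ), (t : ℂ), (t : ℂ)⁻¹])) i *
          gam a b 1 !![0, 1; -1, 0]
            (flipM * toPair (Matrix.diagonal ![(t : ℂ)⁻¹, (t : ℂ), (t : ℂ), (t : ℂ)⁻¹])) j +
        ∑ k : Fin 4, ∑ l : Fin 4,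
          Rmat s 1 1 (fun p => !![0, 1; -1, 0] p.1 p.2) (fun p => !![0, -1; 1, 0] p.1 p.2)
              (flipM * toPair (Matrix.diagonal ![(t : ℂ)⁻¹, (t : ℂ), (t : ℂ), (t : ℂ)⁻¹]))
              (j, i) (l, k) •
            (gam a b 1 !![0, 1; -1, 0]
                (flipM * toPair (Matrix.diagonal ![(t : ℂ)⁻¹, (t : ℂ), (t : ℂ), (t : ℂ)⁻¹])) k *
              gam a b 1 !![0, 1; -1, 0]
                (flipM * toPair (Matrix.diagonal ![(t : ℂ)⁻¹, (t : ℂ), (t : ℂ), (t : ℂ)⁻¹])) l)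
        = (2 * Matrix.diagonal ![(t : ℂ), -(t : ℂ)⁻¹, -(t : ℂ)⁻¹, -(t : ℂ)] j i) •
            (1 : Matrix (Fin 2 ⊕ Fin 2) (Fin 2 ⊕ Fin 2) ℂ))
      ↔ a * b = 1 := by
  have hu : (t : ℂ) ≠ 0 := Complex.ofReal_ne_zero.mpr (ne_of_gt ht0)
  have hss : s * s = 1 := by rcases hs with h | h <;> rw [h] <;> norm_num
  have hXlit : flipM * toPair (Matrix.diagonal ![(t : ℂ)⁻¹, (t : ℂ), (t : ℂ), (t : ℂ)⁻¹])
      = Xex (t : ℂ) := rfl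
  constructor
  · intro h
    have h0 := h 0 0
    rw [hXlit] at h0
    simp only [gam_eq a b (t : ℂ) hu] at h0
    rw [master s (t : ℂ) a b hss hu 0 0] at h0
    have h1 := congrArg
      (fun M : Matrix (Fin 2 ⊕ Fin 2) (Fin 2 ⊕ Fin 2) ℂ => M (Sum.inl 0) (Sum.inl 0)) h0
    simp only [Matrix.smul_apply, Matrix.one_apply_eq, smul_eq_mul, mul_one,
      Matrix.diagonal_apply_eq, Matrix.cons_val_zero] at h1
    have h2t : (2 * (t : ℂ)) ≠ 0 := by simp [hu]
    exact mul_right_cancel₀ h2t (by rw [one_mul]; exact h1)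
  · intro hab i j
    rw [hXlit]
    simp only [gam_eq a b (t : ℂ) hu]
    rw [master s (t : ℂ) a b hss hu i j, hab, one_mul]
end
end

section
/- Let 𝒫 = (𝒫_0,𝒫_1,𝒫_2,𝒫_3) ∈ ℝ⁴ and let m > 0 satisfy m² = 𝒫_0² - 𝒫_1² - 𝒫_2² - 𝒫_3². Then the eigenspace {v ∈ ℂ⁴ : (𝒫·γ)v = m v} equals {(φ, m⁻¹(Σ_{k=0}^{3} 𝒫_k σ_k)φ) : φ ∈ ℂ²}, where σ_0 = 1₂ and a vector v ∈ ℂ⁴ is written as a pair of vectors in ℂ² (its first two and last two components). -/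
open Matrix Complex

noncomputable section

/-- σ₀ = 1₂ together with the Pauli matrices σ₁, σ₂, σ₃. -/
def pauliS : Fin 4 → Matrix (Fin 2) (Fin 2) ℂ :=
  ![1, !![0, 1; 1, 0], !![0, -I; I, 0], !![1, 0; 0, -1]]

/-- The classical gamma matrices: γ⁰ = [[0,1₂],[1₂,0]] and γᵏ = [[0,-σₖ],[σₖ,0]], k = 1,2,3. -/
def gamC : Fin 4 → Matrix (Fin 2 ⊕ Fin 2) (Fin 2 ⊕ Fin 2) ℂ :=
  ![Matrix.fromBlocks 0 1 1 0,
    Matrix.fromBlocks 0 (-pauliS 1) (pauliS 1) 0,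
    Matrix.fromBlocks 0 (-pauliS 2) (pauliS 2) 0,
    Matrix.fromBlocks 0 (-pauliS 3) (pauliS 3) 0]

/-- 𝒫·γ = Σ_j 𝒫_j γ^j for 𝒫 ∈ ℝ⁴. -/
def Pγ (P : Fin 4 → ℝ) : Matrix (Fin 2 ⊕ Fin 2) (Fin 2 ⊕ Fin 2) ℂ :=
  ∑ j : Fin 4, (P j : ℂ) • gamC j

/-!
On `ℂ² ⊕ ℂ²` the matrix `𝒫·γ` is off-diagonal, `[[0, 𝒫̃·σ], [𝒫·σ, 0]]` with `𝒫̃` the spatial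
reflection of `𝒫`, and `(𝒫̃·σ)(𝒫·σ) = (𝒫₀² - 𝒫₁² - 𝒫₂² - 𝒫₃²) • 1 = m² • 1`. For any
off-diagonal block matrix `[[0, A], [B, 0]]` with `A B = c² • 1` and `c ≠ 0`, the lower half of a
`c`-eigenvector is forced to be `c⁻¹ B φ` by the second block row, and the first block row then
holds automatically.
-/

section OffDiagonal

variable {K m n : Type*} [Field K] [Fintype m] [Fintype n] [DecidableEq m]

theorem fromBlocks_zero_mulVec_eq_smul_iff {A : Matrix m n K} {B : Matrix n m K} {c : K}
    (hc : c ≠ 0) (hAB : A * B = c ^ 2 • 1) (v : m ⊕ n → K) :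
    fromBlocks 0 A B 0 *ᵥ v = c • v ↔ ∃ φ : m → K, v = Sum.elim φ (c⁻¹ • B *ᵥ φ) := by
  have hv : fromBlocks 0 A B 0 *ᵥ v = Sum.elim (A *ᵥ (v ∘ Sum.inr)) (B *ᵥ (v ∘ Sum.inl)) := by
    rw [← Sum.elim_comp_inl_inr v, fromBlocks_mulVec]
    simp only [Sum.elim_comp_inl_inr, zero_mulVec, zero_add, add_zero]
  constructor
  · intro h
    refine ⟨v ∘ Sum.inl, ?_⟩
    have hB : B *ᵥ (v ∘ Sum.inl) = c • (v ∘ Sum.inr) := by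
      rw [hv] at h; exact congrArg (· ∘ Sum.inr) h
    rw [hB, smul_smul, inv_mul_cancel₀ hc, one_smul, Sum.elim_comp_inl_inr]
  · rintro ⟨φ, rfl⟩
    have hABφ : A *ᵥ (B *ᵥ φ) = c ^ 2 • φ := by rw [mulVec_mulVec, hAB, smul_mulVec, one_mulVec]
    rw [hv, Sum.elim_comp_inl, Sum.elim_comp_inr, mulVec_smul, hABφ, smul_smul, pow_two,
      inv_mul_cancel_left₀ hc]
    ext (i | i)
    · simp only [Sum.elim_inl, Pi.smul_apply, smul_eq_mul]
    · simp only [Sum.elim_inr, Pi.smul_apply, smul_eq_mul, mul_inv_cancel_left₀ hc]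

end OffDiagonal

def spaceReflection (P : Fin 4 → ℝ) : Fin 4 → ℝ :=
  ![P 0, -P 1, -P 2, -P 3]

theorem sum_smul_pauliS (P : Fin 4 → ℝ) :
    ∑ k : Fin 4, (P k : ℂ) • pauliS k
      = !![(P 0 : ℂ) + P 3, P 1 - I * P 2; P 1 + I * P 2, P 0 - P 3] := by
  ext i j
  fin_cases i <;> fin_cases j <;>
    simp [Fin.sum_univ_four, pauliS] <;> ring

theorem Pγ_eq_fromBlocks (P : Fin 4 → ℝ) :
    Pγ P = fromBlocks 0 (∑ k : Fin 4, (spaceReflection P k : ℂ) • pauliS k)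
      (∑ k : Fin 4, (P k : ℂ) • pauliS k) 0 := by
  simp only [Pγ, gamC, Fin.sum_univ_four, Matrix.cons_val, fromBlocks_smul, fromBlocks_add,
    smul_zero, add_zero]
  congr 1
  simp only [spaceReflection, Matrix.cons_val, ofReal_neg, neg_smul, smul_neg]
  rfl

theorem sum_smul_pauliS_spaceReflection_mul (P : Fin 4 → ℝ) :
    (∑ k : Fin 4, (spaceReflection P k : ℂ) • pauliS k) * ∑ k : Fin 4, (P k : ℂ) • pauliS k
      = (((P 0) ^ 2 - (P 1) ^ 2 - (P 2) ^ 2 - (P 3) ^ 2 : ℝ) : ℂ) • 1 := by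
  rw [sum_smul_pauliS, sum_smul_pauliS]
  ext i j
  fin_cases i <;> fin_cases j <;>
    simp [spaceReflection, mul_apply, Fin.sum_univ_two] <;> ring_nf <;> simp [I_sq] <;> ring

/-- for m > 0 with m² = 𝒫₀² - 𝒫₁² - 𝒫₂² - 𝒫₃², the eigenspace
{v : (𝒫·γ)v = m v} equals {(φ, m⁻¹(Σ_k 𝒫_k σ_k)φ) : φ ∈ ℂ²} (with σ₀ = 1₂). -/
theorem Pγ_eigenspace (P : Fin 4 → ℝ) (m : ℝ) (hm : 0 < m)
    (hm2 : m^2 = (P 0)^2 - (P 1)^2 - (P 2)^2 - (P 3)^2) :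
    {v : Fin 2 ⊕ Fin 2 → ℂ | (Pγ P).mulVec v = (m : ℂ) • v}
      = {v : Fin 2 ⊕ Fin 2 → ℂ | ∃ φ : Fin 2 → ℂ,
          v = Sum.elim φ ((m : ℂ)⁻¹ • ((∑ k : Fin 4, (P k : ℂ) • pauliS k).mulVec φ))} := by
  ext v
  rw [Set.mem_ofPred_eq, Set.mem_ofPred_eq, Pγ_eq_fromBlocks]
  refine fromBlocks_zero_mulVec_eq_smul_iff (by exact_mod_cast hm.ne') ?_ v
  rw [sum_smul_pauliS_spaceReflection_mul, ← hm2, ofReal_pow]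
end
end

section
/- Let 𝒫 = (𝒫_0,𝒫_1,𝒫_2,𝒫_3) ∈ ℝ⁴ satisfy 𝒫_0² = 𝒫_1² + 𝒫_2² + 𝒫_3² and 𝒫_0 ≠ -𝒫_3. Then the kernel {v ∈ ℂ⁴ : (𝒫·γ)v = 0} equals the linear span of the two vectors (𝒫_1 - i𝒫_2, -𝒫_0 - 𝒫_3, 0, 0) and (0, 0, 𝒫_0 + 𝒫_3, 𝒫_1 + i𝒫_2). -/
open Matrix Complex

noncomputable section

lemma Pγ_mulVec_eq_zero_iff (P : Fin 4 → ℝ) (v : Fin 2 ⊕ Fin 2 → ℂ) :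
    (Pγ P).mulVec v = 0 ↔
      ((P 0 : ℂ) - P 3) * v (Sum.inr 0) + (-(P 1 : ℂ) + I * P 2) * v (Sum.inr 1) = 0 ∧
      (-(P 1 : ℂ) - I * P 2) * v (Sum.inr 0) + ((P 0 : ℂ) + P 3) * v (Sum.inr 1) = 0 ∧
      ((P 0 : ℂ) + P 3) * v (Sum.inl 0) + ((P 1 : ℂ) - I * P 2) * v (Sum.inl 1) = 0 ∧
      ((P 1 : ℂ) + I * P 2) * v (Sum.inl 0) + ((P 0 : ℂ) - P 3) * v (Sum.inl 1) = 0 := by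
  rw [funext_iff]
  simp only [Sum.forall, Fin.forall_fin_two]
  simp [Pγ, gamC, pauliS, Matrix.mulVec, dotProduct, Fintype.sum_sum_type, Fin.sum_univ_two,
    Fin.sum_univ_four, Matrix.fromBlocks]
  constructor
  · rintro ⟨⟨a,b⟩,c,d⟩
    exact ⟨by linear_combination a, by linear_combination b, by linear_combination c,
      by linear_combination d⟩
  · rintro ⟨a,b,c,d⟩
    exact ⟨⟨by linear_combination a, by linear_combination b⟩, by linear_combination c,
      by linear_combination d⟩

/-- if 𝒫₀² = 𝒫₁² + 𝒫₂² + 𝒫₃² and 𝒫₀ ≠ -𝒫₃, the kernel of 𝒫·γ is spanned by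
(𝒫₁-i𝒫₂, -𝒫₀-𝒫₃, 0, 0) and (0, 0, 𝒫₀+𝒫₃, 𝒫₁+i𝒫₂). -/
theorem Pγ_kernel (P : Fin 4 → ℝ)
    (h : (P 0)^2 = (P 1)^2 + (P 2)^2 + (P 3)^2) (h03 : P 0 ≠ -P 3) :
    {v : Fin 2 ⊕ Fin 2 → ℂ | (Pγ P).mulVec v = 0}
      = ↑(Submodule.span ℂ
          {Sum.elim ![(P 1 : ℂ) - I * (P 2 : ℂ), -(P 0 : ℂ) - (P 3 : ℂ)] ![0, 0],
           Sum.elim ![0, 0] ![(P 0 : ℂ) + (P 3 : ℂ), (P 1 : ℂ) + I * (P 2 : ℂ)]}) := by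
  have hne : ((P 0 : ℂ) + P 3) ≠ 0 := by
    have hr : (P 0 + P 3 : ℝ) ≠ 0 := fun hh => h03 (by linarith)
    exact_mod_cast (Complex.ofReal_ne_zero.mpr hr)
  have hC : (P 0 : ℂ)^2 = (P 1 : ℂ)^2 + (P 2 : ℂ)^2 + (P 3 : ℂ)^2 := by exact_mod_cast h
  have hsq : ((P 0 : ℂ) - P 3) * ((P 0 : ℂ) + P 3)
      = ((P 1 : ℂ) - I * P 2) * ((P 1 : ℂ) + I * P 2) := by
    linear_combination hC + (P 2 : ℂ)^2 * Complex.I_sq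
  ext v
  simp only [Set.mem_setOf_eq, SetLike.mem_coe, Submodule.mem_span_pair,
    Pγ_mulVec_eq_zero_iff]
  constructor
  · rintro ⟨e1, e2, e3, e4⟩
    refine ⟨-v (Sum.inl 1) / ((P 0 : ℂ) + P 3), v (Sum.inr 0) / ((P 0 : ℂ) + P 3), ?_⟩
    rw [funext_iff]
    simp only [Sum.forall, Fin.forall_fin_two, Pi.add_apply, Pi.smul_apply, Sum.elim_inl,
      Sum.elim_inr, Matrix.cons_val_zero, Matrix.cons_val_one, Matrix.head_cons, smul_eq_mul]
    refine ⟨⟨?_, ?_⟩, ?_, ?_⟩ <;> field_simp <;>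
      first
        | ring1
        | linear_combination e2
        | linear_combination -e2
        | linear_combination e3
        | linear_combination -e3
  · rintro ⟨a, b, rfl⟩
    simp only [Pi.add_apply, Pi.smul_apply, Sum.elim_inl, Sum.elim_inr,
      Matrix.cons_val_zero, Matrix.cons_val_one, Matrix.head_cons, smul_eq_mul]
    refine ⟨?_, ?_, ?_, ?_⟩
    · linear_combination b * hsq
    · ring
    · ring
    · linear_combination -a * hsq
end
end
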